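/- arXiv:2405.01677 — 2 statements merged into one kernel-verified Lean document; each statement's English description precedes it below -/
import Mathlib

section
/- Let w_{t+1} = w_t + η·(g_r⁺ + g_c⁺)/2 be the soft-switching projected-gradient update. If 0 < η ≤ 1/L and cos θ ≤ 0 (i.e. 90° ≤ θ), then the performance improvement is upper bounded: f(w_{t+1}) − f(w_t) ≤ (1/L)·(5(1 − cos²θ)(‖g_r‖² + ‖g_c‖²) − 2 cos θ (1 − cos²θ)‖g_r‖‖g_c‖)/8. -/
/-! The descent lemma for a function with `L`-Lipschitz gradient bounds `f (w + η • d) - f w` by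
`η ⟪∇f w, d⟫ + L η² ‖d‖² / 2`, which for `0 < η ≤ 1 / L` and `⟪∇f w, d⟫ ≥ 0` is at most
`(⟪∇f w, d⟫ + ‖d‖² / 2) / L`. For `d = (g_r⁺ + g_c⁺) / 2` both quantities are explicit:
`⟪g_r + g_c, g_r⁺ + g_c⁺⟫ = (1 - cos²θ)(‖g_r‖² + ‖g_c‖²)`, nonnegative by Cauchy–Schwarz, and
`‖g_r⁺ + g_c⁺‖² = (1 - cos²θ)(‖g_r‖² + ‖g_c‖² - 2 cos θ ‖g_r‖ ‖g_c‖)`. -/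

open RealInnerProductSpace

section

variable {E : Type*} [NormedAddCommGroup E] [InnerProductSpace ℝ E]

section Descent

variable [CompleteSpace E]

theorem HasGradientAt.hasDerivAt_comp_add_smul {f : E → ℝ} {x v g : E} {t : ℝ}
    (hf : HasGradientAt f g (x + t • v)) :
    HasDerivAt (fun s : ℝ => f (x + s • v)) ⟪g, v⟫ t := by
  have hline : HasDerivAt (fun s : ℝ => x + s • v) v t := by
    simpa using ((hasDerivAt_id t).smul_const v).const_add x
  have h := hf.hasFDerivAt.comp_hasDerivAt t hline
  simp only [Function.comp_def, InnerProductSpace.toDual_apply_apply] at h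
  exact h

theorem le_add_inner_gradient_add_sq_of_lipschitz {f : E → ℝ} {L : ℝ}
    (hf : Differentiable ℝ f)
    (hlip : ∀ x y : E, ‖gradient f x - gradient f y‖ ≤ L * ‖x - y‖) (x v : E) :
    f (x + v) ≤ f x + ⟪gradient f x, v⟫ + L / 2 * ‖v‖ ^ 2 := by
  have hderiv (t : ℝ) : HasDerivAt (fun s : ℝ => f (x + s • v)) ⟪gradient f (x + t • v), v⟫ t :=
    (hf _).hasGradientAt.hasDerivAt_comp_add_smul
  have hbound (t : ℝ) :
      HasDerivAt (fun s : ℝ => f x + s * ⟪gradient f x, v⟫ + L / 2 * s ^ 2 * ‖v‖ ^ 2)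
        (⟪gradient f x, v⟫ + L * t * ‖v‖ ^ 2) t :=
    ((((hasDerivAt_id t).mul_const ⟪gradient f x, v⟫).const_add (f x)).add
      (((hasDerivAt_pow 2 t).const_mul (L / 2)).mul_const (‖v‖ ^ 2))).congr_deriv (by ring)
  have hslope (t : ℝ) (ht : t ∈ Set.Ico (0 : ℝ) 1) :
      ⟪gradient f (x + t • v), v⟫ ≤ ⟪gradient f x, v⟫ + L * t * ‖v‖ ^ 2 :=
    calc ⟪gradient f (x + t • v), v⟫
        = ⟪gradient f x, v⟫ + ⟪gradient f (x + t • v) - gradient f x, v⟫ := by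
          rw [inner_sub_left]; ring
      _ ≤ ⟪gradient f x, v⟫ + ‖gradient f (x + t • v) - gradient f x‖ * ‖v‖ := by
          gcongr; exact real_inner_le_norm _ _
      _ ≤ ⟪gradient f x, v⟫ + L * ‖(x + t • v) - x‖ * ‖v‖ := by
          gcongr; exact hlip _ _
      _ = ⟪gradient f x, v⟫ + L * t * ‖v‖ ^ 2 := by
          rw [add_sub_cancel_left, norm_smul, Real.norm_of_nonneg ht.1]; ring
  have hcompare := image_le_of_deriv_right_le_deriv_boundary
    (fun t _ => (hderiv t).continuousAt.continuousWithinAt)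
    (fun t _ => (hderiv t).hasDerivWithinAt) (by simp)
    (fun t _ => (hbound t).continuousAt.continuousWithinAt)
    (fun t _ => (hbound t).hasDerivWithinAt) hslope (Set.right_mem_Icc.2 zero_le_one)
  simpa using hcompare

theorem apply_add_smul_sub_le_of_inner_gradient_nonneg {f : E → ℝ} {L η : ℝ}
    (hf : Differentiable ℝ f)
    (hlip : ∀ x y : E, ‖gradient f x - gradient f y‖ ≤ L * ‖x - y‖)
    (hL : 0 < L) (hη0 : 0 < η) (hηL : η ≤ 1 / L) {x d : E} (hd : 0 ≤ ⟪gradient f x, d⟫) :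
    f (x + η • d) - f x ≤ 1 / L * (⟪gradient f x, d⟫ + ‖d‖ ^ 2 / 2) := by
  have hdescent := le_add_inner_gradient_add_sq_of_lipschitz hf hlip x (η • d)
  rw [real_inner_smul_right, norm_smul, Real.norm_of_nonneg hη0.le, mul_pow] at hdescent
  have hLη : L * η ^ 2 ≤ 1 / L :=
    calc L * η ^ 2 = (L * η) * η := by ring
      _ ≤ 1 * (1 / L) :=
        mul_le_mul (by rwa [le_div_iff₀ hL, mul_comm] at hηL) hηL hη0.le zero_le_one
      _ = 1 / L := one_mul _
  linarith [mul_le_mul_of_nonneg_right hηL hd, mul_le_mul_of_nonneg_right hLη (sq_nonneg ‖d‖)]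

end Descent

section ProjectedGradients

variable {gr gc grp gcp : E} {cosθ : ℝ}

theorem inner_add_projected_gradients (hgr : gr ≠ 0) (hgc : gc ≠ 0)
    (hgrp : grp = gr - (⟪gr, gc⟫ / ‖gc‖ ^ 2) • gc)
    (hgcp : gcp = gc - (⟪gr, gc⟫ / ‖gr‖ ^ 2) • gr)
    (hcos : cosθ = ⟪gr, gc⟫ / (‖gr‖ * ‖gc‖)) :
    ⟪gr + gc, grp + gcp⟫ = (1 - cosθ ^ 2) * (‖gr‖ ^ 2 + ‖gc‖ ^ 2) := by
  have hr : ‖gr‖ ≠ 0 := norm_ne_zero_iff.2 hgr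
  have hc : ‖gc‖ ≠ 0 := norm_ne_zero_iff.2 hgc
  subst hgrp hgcp hcos
  simp only [inner_add_left, inner_add_right, inner_sub_right, real_inner_smul_right,
    real_inner_self_eq_norm_sq, real_inner_comm gr gc]
  field_simp
  ring

theorem norm_add_projected_gradients_sq (hgr : gr ≠ 0) (hgc : gc ≠ 0)
    (hgrp : grp = gr - (⟪gr, gc⟫ / ‖gc‖ ^ 2) • gc)
    (hgcp : gcp = gc - (⟪gr, gc⟫ / ‖gr‖ ^ 2) • gr)
    (hcos : cosθ = ⟪gr, gc⟫ / (‖gr‖ * ‖gc‖)) :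
    ‖grp + gcp‖ ^ 2 = (1 - cosθ ^ 2) * (‖gr‖ ^ 2 + ‖gc‖ ^ 2 - 2 * cosθ * ‖gr‖ * ‖gc‖) := by
  have hr : ‖gr‖ ≠ 0 := norm_ne_zero_iff.2 hgr
  have hc : ‖gc‖ ≠ 0 := norm_ne_zero_iff.2 hgc
  subst hgrp hgcp hcos
  rw [← real_inner_self_eq_norm_sq]
  simp only [inner_add_left, inner_add_right, inner_sub_left, inner_sub_right,
    real_inner_smul_left, real_inner_smul_right]
  simp only [real_inner_self_eq_norm_sq, real_inner_comm gc gr]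
  field_simp
  ring

end ProjectedGradients

end

theorem pcrpo_projected_update_upper_bound_general
    {E : Type*} [NormedAddCommGroup E] [InnerProductSpace ℝ E] [CompleteSpace E]
    (f : E → ℝ) (L : ℝ) (hL : 0 < L)
    (hf : Differentiable ℝ f)
    (hlip : ∀ x y : E, ‖gradient f x - gradient f y‖ ≤ L * ‖x - y‖)
    (gr gc : E) (hgr : gr ≠ 0) (hgc : gc ≠ 0)
    (grp gcp : E)
    (hgrp : grp = gr - (⟪gr, gc⟫ / ‖gc‖ ^ 2) • gc)
    (hgcp : gcp = gc - (⟪gr, gc⟫ / ‖gr‖ ^ 2) • gr)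
    (cosθ : ℝ) (hcos : cosθ = ⟪gr, gc⟫ / (‖gr‖ * ‖gc‖))
    (wt : E) (hw : gradient f wt = gr + gc)
    (η : ℝ) (hη0 : 0 < η) (hηL : η ≤ 1 / L)
    (wt1 : E) (hupdate : wt1 = wt + (η / 2) • (grp + gcp)) :
    f wt1 - f wt ≤
      (1 / L) * (5 * (1 - cosθ ^ 2) * (‖gr‖ ^ 2 + ‖gc‖ ^ 2)
        - 2 * cosθ * (1 - cosθ ^ 2) * ‖gr‖ * ‖gc‖) / 8 := by
  have hinner := inner_add_projected_gradients hgr hgc hgrp hgcp hcos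
  have hnorm := norm_add_projected_gradients_sq hgr hgc hgrp hgcp hcos
  have hcos_sq : cosθ ^ 2 ≤ 1 := by
    rw [sq_le_one_iff_abs_le_one, hcos]
    exact abs_real_inner_div_norm_mul_norm_le_one gr gc
  have hinner_nonneg : 0 ≤ ⟪gr + gc, grp + gcp⟫ :=
    hinner ▸ mul_nonneg (sub_nonneg.2 hcos_sq) (by positivity)
  have hstep : wt1 = wt + η • ((1 / 2 : ℝ) • (grp + gcp)) := by
    rw [hupdate, smul_smul, div_eq_mul_one_div]
  have hdescent := apply_add_smul_sub_le_of_inner_gradient_nonneg hf hlip hL hη0 hηL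
    (x := wt) (d := (1 / 2 : ℝ) • (grp + gcp))
    (by rw [hw, real_inner_smul_right]; exact mul_nonneg (by norm_num) hinner_nonneg)
  rw [← hstep, hw, real_inner_smul_right, norm_smul, mul_pow, hinner, hnorm] at hdescent
  refine hdescent.trans_eq ?_
  norm_num
  ring

/-- Upper bound on performance improvement of the soft-switching
projected-gradient update when the reward and cost gradients conflict
(`cos θ ≤ 0`, i.e. `90° ≤ θ`). -/
theorem pcrpo_projected_update_upper_bound
    {E : Type*} [NormedAddCommGroup E] [InnerProductSpace ℝ E] [CompleteSpace E]
    (f : E → ℝ) (L : ℝ) (hL : 0 < L)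
    (hf : Differentiable ℝ f)
    (hlip : ∀ x y : E, ‖gradient f x - gradient f y‖ ≤ L * ‖x - y‖)
    (gr gc : E) (hgr : gr ≠ 0) (hgc : gc ≠ 0)
    (grp gcp : E)
    (hgrp : grp = gr - (⟪gr, gc⟫ / ‖gc‖ ^ 2) • gc)
    (hgcp : gcp = gc - (⟪gr, gc⟫ / ‖gr‖ ^ 2) • gr)
    (cosθ : ℝ) (hcos : cosθ = ⟪gr, gc⟫ / (‖gr‖ * ‖gc‖))
    (hconflict : cosθ ≤ 0)
    (wt : E) (hw : gradient f wt = gr + gc)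
    (η : ℝ) (hη0 : 0 < η) (hηL : η ≤ 1 / L)
    (wt1 : E) (hupdate : wt1 = wt + (η / 2) • (grp + gcp)) :
    f wt1 - f wt ≤
      (1 / L) * (5 * (1 - cosθ ^ 2) * (‖gr‖ ^ 2 + ‖gc‖ ^ 2)
        - 2 * cosθ * (1 - cosθ ^ 2) * ‖gr‖ * ‖gc‖) / 8 :=
  pcrpo_projected_update_upper_bound_general f L hL hf hlip gr gc hgr hgc grp gcp hgrp hgcp cosθ
    hcos wt hw η hη0 hηL wt1 hupdate
end

section
/- Monotonic improvement for non-conflicting gradients: let w_{t+1} = w_t + η·(g_r + g_c)/2 with 0 < η ≤ 1/L. If cos θ ≥ 0 (i.e. 0° ≤ θ ≤ 90°), then f(w_{t+1}) − f(w_t) > 0, i.e. the averaged-gradient update strictly improves the performance. -/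
open RealInnerProductSpace

/-! For a function whose gradient is `L`-Lipschitz, the mean value inequality gives
`f (x + v) - f x ≥ ⟪∇f x, v⟫ - L ‖v‖²`. Along the step `v = t • ∇f x` with `t = η / 2 ≤ 1 / (2L)`
this is at least `(η / 4) ‖∇f x‖²`. When `cos θ ≥ 0` we have `⟪g_r, g_c⟫ ≥ 0`, so
`‖g_r + g_c‖² ≥ ‖g_c‖² > 0` and the gain is strictly positive. -/

section Gradient

variable {E : Type*} [NormedAddCommGroup E] [InnerProductSpace ℝ E] [CompleteSpace E]

theorem norm_fderiv_sub_fderiv_eq (f : E → ℝ) (x y : E) :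
    ‖fderiv ℝ f x - fderiv ℝ f y‖ = ‖gradient f x - gradient f y‖ := by
  rw [← toDual_gradient, ← toDual_gradient, ← map_sub, LinearIsometryEquiv.norm_map]

theorem abs_sub_sub_inner_gradient_le {f : E → ℝ} {L : ℝ} (hL : 0 ≤ L)
    (hf : Differentiable ℝ f)
    (hlip : ∀ x y : E, ‖gradient f x - gradient f y‖ ≤ L * ‖x - y‖) (x y : E) :
    |f y - f x - ⟪gradient f x, y - x⟫| ≤ L * ‖y - x‖ ^ 2 := by
  have hderiv_le : ∀ z ∈ Metric.closedBall x ‖y - x‖,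
      ‖fderiv ℝ f z - fderiv ℝ f x‖ ≤ L * ‖y - x‖ := fun z hz => by
    rw [norm_fderiv_sub_fderiv_eq]
    exact (hlip z x).trans
      (mul_le_mul_of_nonneg_left (mem_closedBall_iff_norm.mp hz) hL)
  have hmvt := (convex_closedBall x ‖y - x‖).norm_image_sub_le_of_norm_fderiv_le'
    (fun z _ => hf z) hderiv_le (Metric.mem_closedBall_self (norm_nonneg _))
    (mem_closedBall_iff_norm.mpr le_rfl)
  rw [inner_gradient_left, ← Real.norm_eq_abs, sq, ← mul_assoc]
  exact hmvt

theorem mul_one_sub_mul_norm_gradient_sq_le {f : E → ℝ} {L : ℝ} (hL : 0 ≤ L)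
    (hf : Differentiable ℝ f)
    (hlip : ∀ x y : E, ‖gradient f x - gradient f y‖ ≤ L * ‖x - y‖) (x : E) (t : ℝ) :
    t * (1 - L * t) * ‖gradient f x‖ ^ 2 ≤ f (x + t • gradient f x) - f x := by
  have hbound := abs_sub_sub_inner_gradient_le hL hf hlip x (x + t • gradient f x)
  rw [add_sub_cancel_left, real_inner_smul_right, real_inner_self_eq_norm_sq, norm_smul,
    Real.norm_eq_abs, mul_pow, sq_abs] at hbound
  linarith [(abs_le.mp hbound).1]

end Gradient

theorem real_inner_nonneg_of_div_norm_mul_norm_nonneg {F : Type*} [NormedAddCommGroup F]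
    [InnerProductSpace ℝ F] {x y : F} (h : 0 ≤ ⟪x, y⟫ / (‖x‖ * ‖y‖)) : 0 ≤ ⟪x, y⟫ := by
  rcases (mul_nonneg (norm_nonneg x) (norm_nonneg y)).eq_or_lt with hzero | hpos
  · have := abs_real_inner_le_norm x y
    rw [← hzero] at this
    exact (abs_nonpos_iff.mp this).ge
  · simpa using (le_div_iff₀ hpos).mp h

theorem norm_sq_le_norm_add_sq_of_real_inner_nonneg {F : Type*} [NormedAddCommGroup F]
    [InnerProductSpace ℝ F] {x y : F} (h : 0 ≤ ⟪x, y⟫) : ‖y‖ ^ 2 ≤ ‖x + y‖ ^ 2 := by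
  rw [norm_add_sq_real]
  nlinarith [sq_nonneg ‖x‖]

theorem pcrpo_averaged_update_monotonic_improvement_general
    {E : Type*} [NormedAddCommGroup E] [InnerProductSpace ℝ E] [CompleteSpace E]
    (f : E → ℝ) (L : ℝ)
    (hf : Differentiable ℝ f)
    (hlip : ∀ x y : E, ‖gradient f x - gradient f y‖ ≤ L * ‖x - y‖)
    (gr gc : E) (hgc : gc ≠ 0)
    (cosθ : ℝ) (hcos : cosθ = ⟪gr, gc⟫ / (‖gr‖ * ‖gc‖))
    (hnonconflict : 0 ≤ cosθ)
    (wt : E) (hw : gradient f wt = gr + gc)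
    (η : ℝ) (hη0 : 0 < η) (hηL : η ≤ 1 / L)
    (wt1 : E) (hupdate : wt1 = wt + (η / 2) • (gr + gc)) :
    f wt1 - f wt > 0 := by
  have hL : 0 < L := one_div_pos.mp (hη0.trans_le hηL)
  have hLη : L * η ≤ 1 := by rwa [le_div_iff₀ hL, mul_comm] at hηL
  have hinner : 0 ≤ ⟪gr, gc⟫ :=
    real_inner_nonneg_of_div_norm_mul_norm_nonneg (hcos ▸ hnonconflict)
  have hgrad_pos : 0 < ‖gr + gc‖ ^ 2 :=
    (pow_pos (norm_pos_iff.mpr hgc) 2).trans_le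
      (norm_sq_le_norm_add_sq_of_real_inner_nonneg hinner)
  have hgain := mul_one_sub_mul_norm_gradient_sq_le hL.le hf hlip wt (η / 2)
  rw [hw, ← hupdate] at hgain
  have hfactor_pos : 0 < η / 2 * (1 - L * (η / 2)) := by nlinarith
  linarith [mul_pos hfactor_pos hgrad_pos]

/-- Monotonic improvement for non-conflicting gradients: if
`cos θ ≥ 0` (i.e. `0° ≤ θ ≤ 90°`), the averaged-gradient update strictly
improves the performance. -/
theorem pcrpo_averaged_update_monotonic_improvement
    {E : Type*} [NormedAddCommGroup E] [InnerProductSpace ℝ E] [CompleteSpace E]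
    (f : E → ℝ) (L : ℝ) (hL : 0 < L)
    (hf : Differentiable ℝ f)
    (hlip : ∀ x y : E, ‖gradient f x - gradient f y‖ ≤ L * ‖x - y‖)
    (gr gc : E) (hgr : gr ≠ 0) (hgc : gc ≠ 0)
    (cosθ : ℝ) (hcos : cosθ = ⟪gr, gc⟫ / (‖gr‖ * ‖gc‖))
    (hnonconflict : 0 ≤ cosθ)
    (wt : E) (hw : gradient f wt = gr + gc)
    (η : ℝ) (hη0 : 0 < η) (hηL : η ≤ 1 / L)
    (wt1 : E) (hupdate : wt1 = wt + (η / 2) • (gr + gc)) :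
    f wt1 - f wt > 0 :=
  pcrpo_averaged_update_monotonic_improvement_general f L hf hlip gr gc hgc cosθ hcos hnonconflict
    wt hw η hη0 hηL wt1 hupdate
end
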